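/- Let W ~ Π be such that conditional on ‖W‖₁ = k', W is uniformly distributed on the set of binary vectors in {0,1}^T with exactly k' ones, for each k' = 0, 1, ..., k. Then Π solves the DATE equation with equal weights ξ = 1_T/T; in fact the conditional level equation E_{W~Π}[(diag(W) - (1_T/T)W^⊤)J W | ‖W‖₁ = k'] = 0 holds for every k'. -/

import Mathlib

open Finset

/-- The indicator vector in `ℝ^T` of a binary assignment path `w ∈ {0,1}^T`. -/
noncomputable def vecOf (T : ℕ) (w : Fin T → Bool) : Fin T → ℝ :=
  fun t => if w t then 1 else 0

/-- The centering matrix `J = I_T - (1/T)·1_T·1_T^⊤`. -/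
noncomputable def Jmat (T : ℕ) : Matrix (Fin T) (Fin T) ℝ :=
  fun i j => (if i = j then (1 : ℝ) else 0) - 1 / (T : ℝ)

/-- The mean assignment vector `E_{W ~ Π}[W]`. -/
noncomputable def EW (T : ℕ) (P : (Fin T → Bool) → ℝ) : Fin T → ℝ :=
  fun t => ∑ w : Fin T → Bool, P w * vecOf T w t

/-- `J (W - E[W])` for a given path `w`. -/
noncomputable def Jc (T : ℕ) (P : (Fin T → Bool) → ℝ) (w : Fin T → Bool) : Fin T → ℝ :=
  (Jmat T).mulVec (fun t => vecOf T w t - EW T P t)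

/-- The DATE equation: `E_{W~Π}[(diag(W) - ξ W^⊤) J (W - E[W])] = 0` as a vector
equation in `ℝ^T`; the `j`-th row of `(diag(W) - ξ W^⊤) J (W - E[W])` is
`W_j (J(W-E[W]))_j - ξ_j · W^⊤ J (W - E[W])`. -/
noncomputable def DATEeq (T : ℕ) (P : (Fin T → Bool) → ℝ) (ξ : Fin T → ℝ) : Prop :=
  ∀ j : Fin T,
    ∑ w : Fin T → Bool,
      P w * (vecOf T w j * Jc T P w j
        - ξ j * ∑ i : Fin T, vecOf T w i * Jc T P w i) = 0

/-- The number of treated periods `‖w‖₁` of an assignment path. -/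
def countOnes (T : ℕ) (w : Fin T → Bool) : ℕ :=
  ∑ t : Fin T, if w t then 1 else 0

lemma vecOf_sq (T : ℕ) (w : Fin T → Bool) (t : Fin T) :
    vecOf T w t * vecOf T w t = vecOf T w t := by
  unfold vecOf; by_cases h : w t <;> simp [h]

lemma sum_vecOf (T : ℕ) (w : Fin T → Bool) :
    ∑ t, vecOf T w t = (countOnes T w : ℝ) := by
  unfold vecOf countOnes
  push_cast
  exact Finset.sum_congr rfl (fun t _ => by by_cases h : w t <;> simp [h])

lemma Jmat_mulVec (T : ℕ) (w : Fin T → Bool) (j : Fin T) :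
    (Jmat T).mulVec (vecOf T w) j = vecOf T w j - (countOnes T w : ℝ) / T := by
  simp only [Matrix.mulVec, dotProduct, Jmat, sub_mul, Finset.sum_sub_distrib,
    ite_mul, one_mul, zero_mul, Finset.sum_ite_eq, Finset.mem_univ, if_pos]
  rw [← Finset.mul_sum, sum_vecOf]
  ring

def swapEquiv (T : ℕ) (i j : Fin T) : (Fin T → Bool) ≃ (Fin T → Bool) where
  toFun w t := w (Equiv.swap i j t)
  invFun w t := w (Equiv.swap i j t)
  left_inv w := by funext t; simp
  right_inv w := by funext t; simp

lemma countOnes_comp (T : ℕ) (w : Fin T → Bool) (σ : Equiv.Perm (Fin T)) :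
    countOnes T (fun t => w (σ t)) = countOnes T w := by
  unfold countOnes
  exact Equiv.sum_comp σ (fun t => if w t then 1 else 0)

lemma sum_vec_level (T k' : ℕ) (i j : Fin T) :
    ∑ w ∈ univ.filter (fun w : Fin T → Bool => countOnes T w = k'), vecOf T w i
    = ∑ w ∈ univ.filter (fun w : Fin T → Bool => countOnes T w = k'), vecOf T w j := by
  rw [Finset.sum_filter, Finset.sum_filter]
  refine Fintype.sum_equiv (swapEquiv T i j) _ _ (fun w => ?_)
  have hc : countOnes T (swapEquiv T i j w) = countOnes T w :=
    countOnes_comp T w (Equiv.swap i j)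
  have hv : vecOf T (swapEquiv T i j w) j = vecOf T w i := by
    simp [swapEquiv, vecOf, Equiv.swap_apply_right]
  rw [hc, hv]

lemma key (T k' : ℕ) (j : Fin T) :
    (T : ℝ) * ∑ w ∈ univ.filter (fun w : Fin T → Bool => countOnes T w = k'), vecOf T w j
    = (k' : ℝ) * (univ.filter (fun w : Fin T → Bool => countOnes T w = k')).card := by
  have h1 : ∑ i : Fin T, ∑ w ∈ univ.filter (fun w : Fin T → Bool => countOnes T w = k'),
      vecOf T w i
      = (T : ℝ) * ∑ w ∈ univ.filter (fun w : Fin T → Bool => countOnes T w = k'),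
        vecOf T w j := by
    rw [Finset.sum_congr rfl (fun i _ => sum_vec_level T k' i j)]
    simp [Finset.sum_const, card_univ, mul_comm]
  rw [← h1, Finset.sum_comm]
  rw [Finset.sum_congr rfl (fun w hw => sum_vecOf T w)]
  rw [Finset.sum_congr rfl (fun w hw => by
    rw [(Finset.mem_filter.mp hw).2])]
  simp [mul_comm]

lemma levelEq (T : ℕ) (hT : 1 ≤ T) (k' : ℕ) (P : (Fin T → Bool) → ℝ)
    (hconst : ∀ w w' : Fin T → Bool, countOnes T w = k' → countOnes T w' = k' → P w = P w')
    (j : Fin T) :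
    ∑ w ∈ Finset.univ.filter (fun w : Fin T → Bool => countOnes T w = k'),
      P w * (vecOf T w j * (Jmat T).mulVec (vecOf T w) j
        - (1 / (T : ℝ)) *
            ∑ i : Fin T, vecOf T w i * (Jmat T).mulVec (vecOf T w) i) = 0 := by
  have hT0 : (T : ℝ) ≠ 0 := by positivity
  set c : ℝ := (k' : ℝ) / T with hc
  set L := Finset.univ.filter (fun w : Fin T → Bool => countOnes T w = k') with hL
  -- rewrite each summand
  have hterm : ∀ w ∈ L, P w * (vecOf T w j * (Jmat T).mulVec (vecOf T w) j
        - (1 / (T : ℝ)) * ∑ i : Fin T, vecOf T w i * (Jmat T).mulVec (vecOf T w) i)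
      = P w * ((1 - c) * (vecOf T w j - c)) := by
    intro w hw
    have hcw : countOnes T w = k' := (Finset.mem_filter.mp hw).2
    have hJ : ∀ i, (Jmat T).mulVec (vecOf T w) i = vecOf T w i - c := by
      intro i; rw [Jmat_mulVec, hcw]
    have hinner : ∑ i : Fin T, vecOf T w i * (Jmat T).mulVec (vecOf T w) i
        = (k' : ℝ) - c * k' := by
      simp only [hJ, mul_sub, Finset.sum_sub_distrib, vecOf_sq, sum_vecOf, hcw,
        ← Finset.sum_mul, mul_comm]
    have h1 : 1 / (T:ℝ) * ((k':ℝ) - c * k') = c - c * c := by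
      rw [hc]; field_simp
    rw [hinner, hJ j, h1]
    linear_combination P w * vecOf_sq T w j
  rw [Finset.sum_congr rfl hterm]
  rcases Finset.eq_empty_or_nonempty L with h | ⟨w0, hw0⟩
  · simp [h]
  · have hP : ∀ w ∈ L, P w = P w0 := fun w hw =>
      hconst w w0 (Finset.mem_filter.mp hw).2 (Finset.mem_filter.mp hw0).2
    calc ∑ w ∈ L, P w * ((1 - c) * (vecOf T w j - c))
        = P w0 * (1 - c) * (∑ w ∈ L, vecOf T w j - L.card * c) := by
          rw [Finset.sum_congr rfl (fun w hw => by rw [hP w hw])]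
          rw [← Finset.mul_sum, ← Finset.mul_sum, Finset.sum_sub_distrib,
            Finset.sum_const, nsmul_eq_mul, mul_assoc]
      _ = 0 := by
          have hkey := key T k' j
          have : ∑ w ∈ L, vecOf T w j - L.card * c = 0 := by
            rw [hc]
            field_simp
            linarith [hkey]
          rw [this, mul_zero]

lemma countOnes_le_T (T : ℕ) (w : Fin T → Bool) : countOnes T w ≤ T := by
  unfold countOnes
  calc ∑ t : Fin T, (if w t then 1 else 0) ≤ ∑ _t : Fin T, 1 :=
        Finset.sum_le_sum (fun t _ => by by_cases h : w t <;> simp [h])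
    _ = T := by simp


/-- If, conditional on `‖W‖₁ = k'`, `W` is uniform on the binary vectors with
exactly `k'` ones, for each `k' = 0, …, k`, then `Π` solves the DATE equation with
equal weights; in fact the conditional level equation
`E[(diag(W) - (1_T/T) W^⊤) J W ∣ ‖W‖₁ = k'] = 0` holds for every `k' ≤ k`. -/
theorem stmt16 (T k : ℕ) (hT : 1 ≤ T) (hk : k ≤ T)
    (P : (Fin T → Bool) → ℝ)
    (hpos : ∀ w, 0 ≤ P w) (hsum : ∑ w : Fin T → Bool, P w = 1)
    (hsupp : ∀ w, P w ≠ 0 → countOnes T w ≤ k)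
    (hunif : ∀ k' ≤ k, ∀ w w' : Fin T → Bool,
      countOnes T w = k' → countOnes T w' = k' → P w = P w') :
    DATEeq T P (fun _ => 1 / (T : ℝ)) ∧
    ∀ k' ≤ k, ∀ j : Fin T,
      ∑ w ∈ Finset.univ.filter (fun w : Fin T → Bool => countOnes T w = k'),
        P w * (vecOf T w j * (Jmat T).mulVec (vecOf T w) j
          - (1 / (T : ℝ)) *
              ∑ i : Fin T, vecOf T w i * (Jmat T).mulVec (vecOf T w) i) = 0 := by
  have hT0 : (T : ℝ) ≠ 0 := by positivity
  have part2 : ∀ k' ≤ k, ∀ j : Fin T,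
      ∑ w ∈ Finset.univ.filter (fun w : Fin T → Bool => countOnes T w = k'),
        P w * (vecOf T w j * (Jmat T).mulVec (vecOf T w) j
          - (1 / (T : ℝ)) *
              ∑ i : Fin T, vecOf T w i * (Jmat T).mulVec (vecOf T w) i) = 0 :=
    fun k' hk' j => levelEq T hT k' P (fun w w' => hunif k' hk' w w') j
  refine ⟨?_, part2⟩
  -- P is invariant under coordinate swaps
  have hPswap : ∀ (i j : Fin T) (w : Fin T → Bool), P (swapEquiv T i j w) = P w := by
    intro i j w
    have hc : countOnes T (swapEquiv T i j w) = countOnes T w :=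
      countOnes_comp T w (Equiv.swap i j)
    by_cases hn : countOnes T w ≤ k
    · exact hunif (countOnes T w) hn _ _ hc rfl
    · have h1 : P w = 0 := by by_contra h; exact hn (hsupp w h)
      have h2 : P (swapEquiv T i j w) = 0 := by
        by_contra h; exact hn (hc ▸ hsupp _ h)
      rw [h1, h2]
  -- EW is constant
  have hEW : ∀ t t' : Fin T, EW T P t = EW T P t' := by
    intro t t'
    unfold EW
    refine Fintype.sum_equiv (swapEquiv T t t') _ _ (fun w => ?_)
    rw [hPswap]
    congr 1
    simp [swapEquiv, vecOf, Equiv.swap_apply_right]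
  -- Jc equals J applied to the raw vector
  have hJc : ∀ (w : Fin T → Bool) (j : Fin T),
      Jc T P w j = (Jmat T).mulVec (vecOf T w) j := by
    intro w j
    unfold Jc
    simp only [Matrix.mulVec, dotProduct, mul_sub, Finset.sum_sub_distrib]
    have hz : ∑ i : Fin T, Jmat T j i * EW T P i = 0 := by
      rw [Finset.sum_congr rfl (fun i _ => by rw [hEW i j])]
      rw [← Finset.sum_mul]
      have : ∑ i : Fin T, Jmat T j i = 0 := by
        unfold Jmat
        rw [Finset.sum_sub_distrib]
        simp only [Finset.sum_ite_eq, Finset.mem_univ, if_pos, Finset.sum_const,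
          Finset.card_univ, Fintype.card_fin, nsmul_eq_mul]
        field_simp
        ring
      rw [this, zero_mul]
    rw [hz, sub_zero]
  intro j
  simp only [hJc]
  rw [← Finset.sum_fiberwise_of_maps_to (g := countOnes T) (t := Finset.range (T + 1))
    (fun w _ => Finset.mem_range.mpr (Nat.lt_succ_of_le (countOnes_le_T T w)))]
  refine Finset.sum_eq_zero (fun k' _ => ?_)
  by_cases hk' : k' ≤ k
  · exact part2 k' hk' j
  · refine Finset.sum_eq_zero (fun w hw => ?_)
    have hcw : countOnes T w = k' := (Finset.mem_filter.mp hw).2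
    have : P w = 0 := by
      by_contra h
      exact hk' (hcw ▸ hsupp w h)
    rw [this, zero_mul]
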